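/- There are exactly 26 cotransfer systems on the lattice N5. -/

import Mathlib

/-- The five-element nonmodular lattice `N₅` with `0 < A < C < 1`, `0 < B < 1`,
and `B` incomparable to `A` and `C`. -/
inductive N5 : Type
  | zero | A | B | C | one
  deriving DecidableEq

instance instFintypeN5 : Fintype N5 :=
  ⟨⟨[N5.zero, N5.A, N5.B, N5.C, N5.one], by decide⟩, fun x => by cases x <;> decide⟩

namespace N5

def leBool : N5 → N5 → Bool
  | zero, _ => true
  | _, one => true
  | A, A => true
  | A, C => true
  | B, B => true
  | C, C => true
  | _, _ => false

instance : LE N5 := ⟨fun x y => leBool x y = true⟩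

instance : DecidableRel ((· ≤ ·) : N5 → N5 → Prop) :=
  fun x y => inferInstanceAs (Decidable (leBool x y = true))

def supFn (x y : N5) : N5 := if leBool x y then y else if leBool y x then x else one
def infFn (x y : N5) : N5 := if leBool x y then x else if leBool y x then y else zero

instance : Lattice N5 where
  le := (· ≤ ·)
  le_refl := by decide
  le_trans := by decide
  le_antisymm := by decide
  sup := supFn
  le_sup_left := by decide
  le_sup_right := by decide
  sup_le := by decide
  inf := infFn
  inf_le_left := by decide
  inf_le_right := by decide
  le_inf := by decide

end N5

section Defs

variable {L : Type*} [Lattice L]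

/-- `llp S a b`: `a ≤ b` and `(a, b)` has the left lifting property with respect to
every pair in `S`. -/
def llp (S : L → L → Prop) (a b : L) : Prop :=
  a ≤ b ∧ ∀ x y, S x y → a ≤ x → b ≤ y → b ≤ x

/-- `rlp S x y`: `x ≤ y` and every pair in `S` has the left lifting property with
respect to `(x, y)`. -/
def rlp (S : L → L → Prop) (x y : L) : Prop :=
  x ≤ y ∧ ∀ a b, S a b → a ≤ x → b ≤ y → b ≤ x

/-- A transfer system: a reflexive transitive subrelation of `≤` closed under pullbacks. -/
structure IsTransferSystem (T : L → L → Prop) : Prop where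
  subLE : ∀ x y, T x y → x ≤ y
  refl : ∀ x, T x x
  trans : ∀ x y z, T x y → T y z → T x z
  pullback : ∀ x y z, T x y → z ≤ y → T (x ⊓ z) z

/-- A cotransfer system: a reflexive transitive subrelation of `≤` closed under pushouts. -/
structure IsCotransferSystem (K : L → L → Prop) : Prop where
  subLE : ∀ x y, K x y → x ≤ y
  refl : ∀ x, K x x
  trans : ∀ x y z, K x y → K y z → K x z
  pushout : ∀ x y z, K x y → x ≤ z → K z (y ⊔ z)

/-- A wide decomposable subcategory of a lattice. -/
structure IsWideDecomposable (W : L → L → Prop) : Prop where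
  subLE : ∀ x y, W x y → x ≤ y
  refl : ∀ x, W x x
  trans : ∀ x y z, W x y → W y z → W x z
  decomp : ∀ x y z, W x z → x ≤ y → y ≤ z → W x y ∧ W y z

/-- A model structure on a lattice, given by weak equivalences `W`, cofibrations `C`
and fibrations `F`. -/
structure IsModelStructure (W C F : L → L → Prop) : Prop where
  W_subLE : ∀ x y, W x y → x ≤ y
  W_refl : ∀ x, W x x
  C_subLE : ∀ x y, C x y → x ≤ y
  C_refl : ∀ x, C x x
  F_subLE : ∀ x y, F x y → x ≤ y
  F_refl : ∀ x, F x x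
  two_three_comp : ∀ x y z, x ≤ y → y ≤ z → W x y → W y z → W x z
  two_three_right : ∀ x y z, x ≤ y → y ≤ z → W x y → W x z → W y z
  two_three_left : ∀ x y z, x ≤ y → y ≤ z → W y z → W x z → W x y
  lift_AC : ∀ x y, (C x y ∧ W x y) ↔ llp F x y
  lift_C : ∀ x y, C x y ↔ llp (fun a b => F a b ∧ W a b) x y
  lift_F : ∀ x y, F x y ↔ rlp (fun a b => C a b ∧ W a b) x y
  lift_AF : ∀ x y, (F x y ∧ W x y) ↔ rlp C x y
  fact_C_AF : ∀ x y, x ≤ y → ∃ z, x ≤ z ∧ z ≤ y ∧ C x z ∧ F z y ∧ W z y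
  fact_AC_F : ∀ x y, x ≤ y → ∃ z, x ≤ z ∧ z ≤ y ∧ C x z ∧ W x z ∧ F z y

/-- The smallest transfer system containing `S`: the intersection of all transfer
systems containing `S`. -/
def genTS (S : L → L → Prop) (x y : L) : Prop :=
  ∀ T : L → L → Prop, IsTransferSystem T → (∀ a b, S a b → T a b) → T x y

end Defs

/-- A bundled model structure on a lattice. -/
structure ModelStructure (L : Type*) [Lattice L] where
  W : L → L → Prop
  C : L → L → Prop
  F : L → L → Prop
  isModel : IsModelStructure W C F

/-- `M'` is a left Bousfield localization of `M`: same cofibrations, more weak equivalences. -/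
def IsLeftBousfieldLoc {L : Type*} [Lattice L] (M M' : ModelStructure L) : Prop :=
  M'.C = M.C ∧ ∀ x y, M.W x y → M'.W x y

/-- `M'` is a right Bousfield localization of `M`: same fibrations, more weak equivalences. -/
def IsRightBousfieldLoc {L : Type*} [Lattice L] (M M' : ModelStructure L) : Prop :=
  M'.F = M.F ∧ ∀ x y, M.W x y → M'.W x y


section Aux

open Classical in
noncomputable def ctsEnc (K : N5 → N5 → Prop) :
    Bool × Bool × Bool × Bool × Bool × Bool × Bool × Bool :=
  (decide (K N5.zero N5.A), decide (K N5.zero N5.B), decide (K N5.zero N5.C),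
   decide (K N5.zero N5.one), decide (K N5.A N5.C), decide (K N5.A N5.one),
   decide (K N5.B N5.one), decide (K N5.C N5.one))

def ctsDec (v : Bool × Bool × Bool × Bool × Bool × Bool × Bool × Bool) :
    N5 → N5 → Bool :=
  fun x y => match x, y with
  | N5.zero, N5.A => v.1
  | N5.zero, N5.B => v.2.1
  | N5.zero, N5.C => v.2.2.1
  | N5.zero, N5.one => v.2.2.2.1
  | N5.A, N5.C => v.2.2.2.2.1
  | N5.A, N5.one => v.2.2.2.2.2.1
  | N5.B, N5.one => v.2.2.2.2.2.2.1
  | N5.C, N5.one => v.2.2.2.2.2.2.2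
  | x, y => decide (x = y)

lemma ctsDec_enc {K : N5 → N5 → Prop} (h : IsCotransferSystem K) :
    (fun x y => ctsDec (ctsEnc K) x y = true) = K := by
  funext x y
  apply propext
  cases x <;> cases y <;>
    simp only [ctsDec, ctsEnc, decide_eq_true_eq] <;>
    first
      | exact Iff.rfl
      | exact ⟨fun _ => h.refl _, fun _ => trivial⟩
      | exact ⟨fun hf => absurd hf (by decide),
          fun hk => absurd (h.subLE _ _ hk) (by decide)⟩

lemma decide_bool_eq (b : Bool) (i : Decidable (b = true)) : @decide _ i = b := by
  rw [Subsingleton.elim i (instDecidableEqBool b true)]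
  cases b <;> rfl

instance (v) : Decidable (IsCotransferSystem (fun x y => ctsDec v x y = true)) :=
  decidable_of_iff
    ((∀ x y, ctsDec v x y = true → x ≤ y) ∧ (∀ x, ctsDec v x x = true) ∧
     (∀ x y z, ctsDec v x y = true → ctsDec v y z = true → ctsDec v x z = true) ∧
     (∀ x y z, ctsDec v x y = true → x ≤ z → ctsDec v z (y ⊔ z) = true))
    ⟨fun ⟨a, b, c, d⟩ => ⟨a, b, c, d⟩, fun ⟨a, b, c, d⟩ => ⟨a, b, c, d⟩⟩

noncomputable def ctsEquiv :
    {K : N5 → N5 → Prop // IsCotransferSystem K} ≃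
    {v : Bool × Bool × Bool × Bool × Bool × Bool × Bool × Bool //
      IsCotransferSystem (fun x y => ctsDec v x y = true)} where
  toFun K := ⟨ctsEnc K.1, by rw [ctsDec_enc K.2]; exact K.2⟩
  invFun v := ⟨fun x y => ctsDec v.1 x y = true, v.2⟩
  left_inv K := Subtype.ext (ctsDec_enc K.2)
  right_inv v := by
    refine Subtype.ext ?_
    obtain ⟨⟨a, b, c, d, e, f, g, i⟩, hv⟩ := v
    simp only [ctsEnc, ctsDec, decide_bool_eq]
    simp only [Prod.mk.injEq]
    refine ⟨?_, ?_, ?_, ?_, ?_, ?_, ?_, ?_⟩ <;> exact decide_bool_eq _ _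

end Aux

/-- There are exactly 26 cotransfer systems on `N5`. -/
theorem card_cotransfer_systems_N5 :
    Nat.card {K : N5 → N5 → Prop // IsCotransferSystem K} = 26 := by
  rw [Nat.card_eq_of_bijective ctsEquiv ctsEquiv.bijective, Nat.card_eq_fintype_card]
  decide
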